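/- arXiv:1409.3497 — 9 statements merged into one kernel-verified Lean document; each statement's English description precedes it below -/
import Mathlib

section
/- If A ⊣ B via bounded intertwining T, then B* ⊣ A* via T*, and consequently σ_r(B) ⊆ σ_r(A). -/
/-!
Since `(range T)ᗮ = ker T*`, `T` has dense range iff `T*` is injective, and dually `T` is injective
iff `T*` has dense range. If `B T = T A` on `D(A)`, then for `η ∈ D(B*)` and `ξ ∈ D(A)`,
`⟪T* B* η, ξ⟫ = ⟪η, B T ξ⟫ = ⟪η, T A ξ⟫ = ⟪T* η, A ξ⟫`, which says exactly that `T* η ∈ D(A*)`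
with `A* T* η = T* B* η`. Since `T` also intertwines `A - λ` with `B - λ`, it maps eigenvectors
of `A` injectively to eigenvectors of `B`, and the range of `A - λ` onto a subset of the range of
`B - λ`, which is therefore dense whenever the former is.
-/

open scoped InnerProductSpace

variable {H : Type*} [NormedAddCommGroup H] [InnerProductSpace ℂ H]

/-- The residual spectrum: `λ` such that `A - λI` is injective but does not have
dense range. -/
def residualSpectrum (A : H →ₗ.[ℂ] H) : Set ℂ :=
  {l | (∀ ξ : A.domain, A ξ = l • (ξ : H) → (ξ : H) = 0) ∧
       ¬ Dense (Set.range fun ξ : A.domain => A ξ - l • (ξ : H))}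

namespace ContinuousLinearMap

variable {𝕜 E F : Type*} [RCLike 𝕜]
  [NormedAddCommGroup E] [InnerProductSpace 𝕜 E] [CompleteSpace E]
  [NormedAddCommGroup F] [InnerProductSpace 𝕜 F] [CompleteSpace F]

theorem denseRange_iff_injective_adjoint (T : E →L[𝕜] F) :
    DenseRange T ↔ Function.Injective (adjoint T) := by
  have h := (T : E →ₗ[𝕜] F).range.dense_iff_topologicalClosure_eq_top.trans
    Submodule.topologicalClosure_eq_top_iff
  rw [T.orthogonal_range, LinearMap.coe_range] at h
  exact h.trans LinearMap.ker_eq_bot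

theorem injective_iff_denseRange_adjoint (T : E →L[𝕜] F) :
    Function.Injective T ↔ DenseRange (adjoint T) := by
  rw [denseRange_iff_injective_adjoint, adjoint_adjoint]

end ContinuousLinearMap

namespace LinearPMap

variable {𝕜 E E' F F' : Type*} [RCLike 𝕜]
  [NormedAddCommGroup E] [InnerProductSpace 𝕜 E] [CompleteSpace E]
  [NormedAddCommGroup E'] [InnerProductSpace 𝕜 E'] [CompleteSpace E']
  [NormedAddCommGroup F] [InnerProductSpace 𝕜 F] [CompleteSpace F]
  [NormedAddCommGroup F'] [InnerProductSpace 𝕜 F'] [CompleteSpace F']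

theorem adjoint_intertwining {A : E →ₗ.[𝕜] E'} {B : F →ₗ.[𝕜] F'}
    (hA : Dense (A.domain : Set E)) (hB : Dense (B.domain : Set F))
    (S : E →L[𝕜] F) (R : E' →L[𝕜] F')
    (hmap : ∀ ξ : A.domain, S ξ ∈ B.domain)
    (hint : ∀ ξ : A.domain, B ⟨S ξ, hmap ξ⟩ = R (A ξ)) (η : B†.domain) :
    ∃ h : R.adjoint η ∈ A†.domain, A† ⟨R.adjoint η, h⟩ = S.adjoint (B† η) := by
  have key (ξ : A.domain) : ⟪S.adjoint (B† η), ξ⟫_𝕜 = ⟪R.adjoint η, A ξ⟫_𝕜 := by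
    rw [S.adjoint_inner_left, R.adjoint_inner_left, ← hint ξ]
    exact adjoint_isFormalAdjoint hB η ⟨S ξ, hmap ξ⟩
  have hmem : R.adjoint η ∈ A†.domain := mem_adjoint_domain_of_exists _ ⟨_, key⟩
  exact ⟨hmem, adjoint_apply_eq hA ⟨_, hmem⟩ key⟩

end LinearPMap

theorem residualSpectrum_subset_of_intertwining {H K : Type*}
    [NormedAddCommGroup H] [InnerProductSpace ℂ H]
    [NormedAddCommGroup K] [InnerProductSpace ℂ K]
    {A : H →ₗ.[ℂ] H} {B : K →ₗ.[ℂ] K} {T : H →L[ℂ] K}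
    (hTinj : Function.Injective T) (hTrange : DenseRange T)
    (hmap : ∀ ξ : A.domain, T ξ ∈ B.domain)
    (hint : ∀ ξ : A.domain, B ⟨T ξ, hmap ξ⟩ = T (A ξ)) :
    residualSpectrum B ⊆ residualSpectrum A := by
  have hint_sub (l : ℂ) (ξ : A.domain) :
      B ⟨T ξ, hmap ξ⟩ - l • T ξ = T (A ξ - l • (ξ : H)) := by
    rw [hint, map_sub, map_smul]
  rintro l ⟨hBinj, hBrange⟩
  refine ⟨fun ξ hξ => hTinj ?_, fun hArange => hBrange ?_⟩
  · rw [map_zero]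
    refine hBinj ⟨T ξ, hmap ξ⟩ (sub_eq_zero.mp ?_)
    rw [hint_sub, hξ, sub_self, map_zero]
  · refine (hTrange.dense_image T.continuous hArange).mono ?_
    rintro _ ⟨_, ⟨ξ, rfl⟩, rfl⟩
    exact ⟨⟨T ξ, hmap ξ⟩, hint_sub l ξ⟩

theorem adjoint_quasiSimilar_and_residual_general {H K : Type*}
    [NormedAddCommGroup H] [InnerProductSpace ℂ H] [CompleteSpace H]
    [NormedAddCommGroup K] [InnerProductSpace ℂ K] [CompleteSpace K]
    (A : H →ₗ.[ℂ] H) (B : K →ₗ.[ℂ] K)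
    (hAdense : Dense (A.domain : Set H)) (hBdense : Dense (B.domain : Set K))
    (T : H →L[ℂ] K)
    (hTinj : Function.Injective T) (hTrange : DenseRange T)
    (hmap : ∀ ξ : A.domain, T (ξ : H) ∈ B.domain)
    (hint : ∀ ξ : A.domain, B ⟨T (ξ : H), hmap ξ⟩ = T (A ξ)) :
    (Function.Injective (ContinuousLinearMap.adjoint T)) ∧
    (DenseRange (ContinuousLinearMap.adjoint T)) ∧
    (∀ η : B.adjoint.domain,
      ∃ h : (ContinuousLinearMap.adjoint T) (η : K) ∈ A.adjoint.domain,
        A.adjoint ⟨(ContinuousLinearMap.adjoint T) (η : K), h⟩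
          = (ContinuousLinearMap.adjoint T) (B.adjoint η)) ∧
    residualSpectrum B ⊆ residualSpectrum A :=
  ⟨T.denseRange_iff_injective_adjoint.mp hTrange,
    T.injective_iff_denseRange_adjoint.mp hTinj,
    LinearPMap.adjoint_intertwining hAdense hBdense T T hmap hint,
    residualSpectrum_subset_of_intertwining hTinj hTrange hmap hint⟩

/-- If `A ⊣ B` via a bounded intertwining operator `T` (injective, with dense range),
then `B* ⊣ A*` via `T*`, and consequently `σ_r(B) ⊆ σ_r(A)`. -/
theorem adjoint_quasiSimilar_and_residual {H K : Type*}
    [NormedAddCommGroup H] [InnerProductSpace ℂ H] [CompleteSpace H]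
    [NormedAddCommGroup K] [InnerProductSpace ℂ K] [CompleteSpace K]
    (A : H →ₗ.[ℂ] H) (B : K →ₗ.[ℂ] K)
    (hAdense : Dense (A.domain : Set H)) (hBdense : Dense (B.domain : Set K))
    (hAclosed : A.IsClosed) (hBclosed : B.IsClosed)
    (T : H →L[ℂ] K)
    (hTinj : Function.Injective T) (hTrange : DenseRange T)
    (hmap : ∀ ξ : A.domain, T (ξ : H) ∈ B.domain)
    (hint : ∀ ξ : A.domain, B ⟨T (ξ : H), hmap ξ⟩ = T (A ξ)) :
    (Function.Injective (ContinuousLinearMap.adjoint T)) ∧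
    (DenseRange (ContinuousLinearMap.adjoint T)) ∧
    (∀ η : B.adjoint.domain,
      ∃ h : (ContinuousLinearMap.adjoint T) (η : K) ∈ A.adjoint.domain,
        A.adjoint ⟨(ContinuousLinearMap.adjoint T) (η : K), h⟩
          = (ContinuousLinearMap.adjoint T) (B.adjoint η)) ∧
    residualSpectrum B ⊆ residualSpectrum A :=
  adjoint_quasiSimilar_and_residual_general A B hAdense hBdense T hTinj hTrange hmap hint
end

section
/- If A ⊣ B via a bounded intertwining operator T such that T⁻¹ is everywhere defined and bounded, and T(D(A)) is a core for B, then σ_p(B) ⊆ σ(A). -/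
open scoped InnerProductSpace

variable {H : Type*} [NormedAddCommGroup H] [InnerProductSpace ℂ H]

/-- The point spectrum (set of eigenvalues) of a partially defined operator. -/
def pointSpectrum (A : H →ₗ.[ℂ] H) : Set ℂ :=
  {l | ∃ ξ : A.domain, (ξ : H) ≠ 0 ∧ A ξ = l • (ξ : H)}

/-- The resolvent set of a partially defined operator. -/
def resSet (A : H →ₗ.[ℂ] H) : Set ℂ :=
  {l | ∃ R : H →L[ℂ] H,
    (∀ η : H, ∃ h : R η ∈ A.domain, A ⟨R η, h⟩ - l • R η = η) ∧
    (∀ ξ : A.domain, R (A ξ - l • (ξ : H)) = (ξ : H))}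

/-!
If `l` is an eigenvalue of `B` and lies in the resolvent set of `A`, then `A - l` is bounded
below, `‖ξ‖ ≤ ‖R‖ ‖(A - l) ξ‖`. Conjugating by `T` transports this bound to `B - l` on
`T(D(A))`, and since that subspace is a core the bound survives the passage to the graph-norm
closure, i.e. it holds on all of `D(B)`. An eigenvector of `B` for `l` then has norm `0`.
-/

open Set

theorem exists_norm_le_mul_norm_sub_smul_of_mem_resSet {A : H →ₗ.[ℂ] H} {l : ℂ}
    (hl : l ∈ resSet A) :
    ∃ C, 0 ≤ C ∧ ∀ ξ : A.domain, ‖(ξ : H)‖ ≤ C * ‖A ξ - l • (ξ : H)‖ := by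
  obtain ⟨R, -, hR⟩ := hl
  refine ⟨‖R‖, norm_nonneg R, fun ξ => ?_⟩
  calc ‖(ξ : H)‖ = ‖R (A ξ - l • (ξ : H))‖ := by rw [hR ξ]
    _ ≤ ‖R‖ * ‖A ξ - l • (ξ : H)‖ := R.le_opNorm _

section LowerBound

variable {𝕜 E F : Type*} [NontriviallyNormedField 𝕜]
  [NormedAddCommGroup E] [NormedSpace 𝕜 E] [NormedAddCommGroup F] [NormedSpace 𝕜 F]

theorem norm_le_mul_norm_sub_smul_of_intertwining
    {A : E →ₗ.[𝕜] E} {B : F →ₗ.[𝕜] F} {T : E →L[𝕜] F} {Tinv : F →L[𝕜] E}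
    (hleft : ∀ ξ : E, Tinv (T ξ) = ξ) (hmap : ∀ ξ : A.domain, T (ξ : E) ∈ B.domain)
    (hint : ∀ ξ : A.domain, B ⟨T (ξ : E), hmap ξ⟩ = T (A ξ)) {l : 𝕜} {C : ℝ} (hC : 0 ≤ C)
    (hA : ∀ ξ : A.domain, ‖(ξ : E)‖ ≤ C * ‖A ξ - l • (ξ : E)‖) (ξ : A.domain) :
    ‖T ξ‖ ≤ ‖T‖ * C * ‖Tinv‖ * ‖B ⟨T ξ, hmap ξ⟩ - l • T ξ‖ := by
  have hconj : A ξ - l • (ξ : E) = Tinv (B ⟨T ξ, hmap ξ⟩ - l • T ξ) := by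
    rw [Tinv.map_sub, Tinv.map_smul, hint, hleft, hleft]
  calc ‖T ξ‖ ≤ ‖T‖ * ‖(ξ : E)‖ := T.le_opNorm _
    _ ≤ ‖T‖ * (C * ‖Tinv (B ⟨T ξ, hmap ξ⟩ - l • T ξ)‖) := by
        rw [← hconj]; gcongr; exact hA ξ
    _ ≤ ‖T‖ * (C * (‖Tinv‖ * ‖B ⟨T ξ, hmap ξ⟩ - l • T ξ‖)) := by
        gcongr; exact Tinv.le_opNorm _
    _ = ‖T‖ * C * ‖Tinv‖ * ‖B ⟨T ξ, hmap ξ⟩ - l • T ξ‖ := by ring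

theorem mem_closure_range_graph_of_core {B : F →ₗ.[𝕜] F} {ι : Type*}
    {g : ι → B.domain}
    (hg : ∀ (η : B.domain) (ε : ℝ), 0 < ε → ∃ i, ‖(g i : F) - η‖ < ε ∧ ‖B (g i) - B η‖ < ε)
    (η : B.domain) : ((η : F), B η) ∈ closure (range fun i => ((g i : F), B (g i))) := by
  refine Metric.mem_closure_iff.2 fun ε hε => ?_
  obtain ⟨i, hi₁, hi₂⟩ := hg η ε hε
  refine ⟨_, mem_range_self i, ?_⟩
  rw [Prod.dist_eq, max_lt_iff, dist_comm, dist_eq_norm, dist_comm, dist_eq_norm]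
  exact ⟨hi₁, hi₂⟩

theorem norm_le_mul_norm_sub_smul_of_core {B : F →ₗ.[𝕜] F} {ι : Type*}
    {g : ι → B.domain}
    (hg : ∀ (η : B.domain) (ε : ℝ), 0 < ε → ∃ i, ‖(g i : F) - η‖ < ε ∧ ‖B (g i) - B η‖ < ε)
    {l : 𝕜} {C : ℝ} (hC : ∀ i, ‖(g i : F)‖ ≤ C * ‖B (g i) - l • (g i : F)‖) (η : B.domain) :
    ‖(η : F)‖ ≤ C * ‖B η - l • (η : F)‖ := by
  have hclosed : IsClosed {p : F × F | ‖p.1‖ ≤ C * ‖p.2 - l • p.1‖} :=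
    isClosed_le (by fun_prop) (by fun_prop)
  exact closure_minimal (range_subset_iff.2 hC) hclosed (mem_closure_range_graph_of_core hg η)

end LowerBound

theorem pointSpectrum_subset_spectrum_general {H K : Type*}
    [NormedAddCommGroup H] [InnerProductSpace ℂ H]
    [NormedAddCommGroup K] [InnerProductSpace ℂ K]
    (A : H →ₗ.[ℂ] H) (B : K →ₗ.[ℂ] K)
    (T : H →L[ℂ] K) (Tinv : K →L[ℂ] H)
    (hleft : ∀ ξ : H, Tinv (T ξ) = ξ)
    (hmap : ∀ ξ : A.domain, T (ξ : H) ∈ B.domain)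
    (hint : ∀ ξ : A.domain, B ⟨T (ξ : H), hmap ξ⟩ = T (A ξ))
    (hcore : ∀ (η : B.domain) (ε : ℝ), 0 < ε → ∃ ξ : A.domain,
      ‖T (ξ : H) - (η : K)‖ < ε ∧ ‖B ⟨T (ξ : H), hmap ξ⟩ - B η‖ < ε) :
    pointSpectrum B ⊆ (resSet A)ᶜ := by
  rintro l ⟨η, hη, hηeig⟩ hl
  obtain ⟨C, hC, hA⟩ := exists_norm_le_mul_norm_sub_smul_of_mem_resSet hl
  have hB := norm_le_mul_norm_sub_smul_of_core (g := fun ξ : A.domain => ⟨T ξ, hmap ξ⟩) hcore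
    (norm_le_mul_norm_sub_smul_of_intertwining hleft hmap hint hC hA) η
  rw [hηeig, sub_self, norm_zero, mul_zero] at hB
  exact hη (norm_le_zero_iff.1 hB)

/-- If `A ⊣ B` via a bounded intertwining operator `T` whose inverse is everywhere
defined and bounded, and `T(D(A))` is a core for `B` (dense in `D(B)` for the graph
norm), then `σ_p(B) ⊆ σ(A)`. -/
theorem pointSpectrum_subset_spectrum {H K : Type*}
    [NormedAddCommGroup H] [InnerProductSpace ℂ H] [CompleteSpace H]
    [NormedAddCommGroup K] [InnerProductSpace ℂ K] [CompleteSpace K]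
    (A : H →ₗ.[ℂ] H) (B : K →ₗ.[ℂ] K)
    (hAdense : Dense (A.domain : Set H)) (hBdense : Dense (B.domain : Set K))
    (hAclosed : A.IsClosed) (hBclosed : B.IsClosed)
    (T : H →L[ℂ] K) (Tinv : K →L[ℂ] H)
    (hleft : ∀ ξ : H, Tinv (T ξ) = ξ) (hright : ∀ η : K, T (Tinv η) = η)
    (hmap : ∀ ξ : A.domain, T (ξ : H) ∈ B.domain)
    (hint : ∀ ξ : A.domain, B ⟨T (ξ : H), hmap ξ⟩ = T (A ξ))
    (hcore : ∀ (η : B.domain) (ε : ℝ), 0 < ε → ∃ ξ : A.domain,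
      ‖T (ξ : H) - (η : K)‖ < ε ∧ ‖B ⟨T (ξ : H), hmap ξ⟩ - B η‖ < ε) :
    pointSpectrum B ⊆ (resSet A)ᶜ :=
  pointSpectrum_subset_spectrum_general A B T Tinv hleft hmap hint hcore
end

section
/- Suppose A ⊣ B with bounded intertwining T. If λ ∈ ρ(A) and X_λ is defined on D(T⁻¹) by X_λη = T(A − λI)⁻¹T⁻¹η, then (B − λI)X_λη = η for every η ∈ D(T⁻¹). -/
open scoped InnerProductSpace

/-- Suppose `A ⊣ B` with bounded intertwining operator `T`, and let `λ ∈ ρ(A)` with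
resolvent `R = (A - λI)⁻¹`. Then, for `X_λ := T (A - λ)⁻¹ T⁻¹` defined on
`D(T⁻¹) = range T`, one has `(B - λI) X_λ η = η` for every `η = T ζ ∈ D(T⁻¹)`. -/
theorem left_inverse_on_range {H K : Type*}
    [NormedAddCommGroup H] [InnerProductSpace ℂ H] [CompleteSpace H]
    [NormedAddCommGroup K] [InnerProductSpace ℂ K] [CompleteSpace K]
    (A : H →ₗ.[ℂ] H) (B : K →ₗ.[ℂ] K)
    (hAdense : Dense (A.domain : Set H)) (hBdense : Dense (B.domain : Set K))
    (hAclosed : A.IsClosed) (hBclosed : B.IsClosed)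
    (T : H →L[ℂ] K)
    (hTinj : Function.Injective T) (hTrange : DenseRange T)
    (hmap : ∀ ξ : A.domain, T (ξ : H) ∈ B.domain)
    (hint : ∀ ξ : A.domain, B ⟨T (ξ : H), hmap ξ⟩ = T (A ξ))
    (l : ℂ) (R : H →L[ℂ] H)
    (hR1 : ∀ η : H, ∃ h : R η ∈ A.domain, A ⟨R η, h⟩ - l • R η = η)
    (hR2 : ∀ ξ : A.domain, R (A ξ - l • (ξ : H)) = (ξ : H)) :
    ∀ ζ : H, ∃ (h : R ζ ∈ A.domain) (h2 : T (R ζ) ∈ B.domain),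
      B ⟨T (R ζ), h2⟩ - l • T (R ζ) = T ζ := by
  intro ζ
  obtain ⟨h, hh⟩ := hR1 ζ
  refine ⟨h, hmap ⟨R ζ, h⟩, ?_⟩
  rw [hint ⟨R ζ, h⟩]
  calc T (A ⟨R ζ, h⟩) - l • T (R ζ) = T (A ⟨R ζ, h⟩ - l • R ζ) := by
        rw [map_sub, map_smul]
    _ = T ζ := by rw [hh]
end

section
/- Let A, B be closed operators with A ⊣ B via bounded intertwining T whose inverse T⁻¹ is everywhere defined and bounded. Then ρ(A) \ σ_p(B) ⊆ ρ(B). -/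
open scoped InnerProductSpace

variable {H : Type*} [NormedAddCommGroup H] [InnerProductSpace ℂ H]

/-- Let `A, B` be closed operators with `A ⊣ B` via a bounded intertwining operator `T`
whose inverse `T⁻¹` is everywhere defined and bounded. Then `ρ(A) \ σ_p(B) ⊆ ρ(B)`. -/
theorem resolvent_diff_pointSpectrum_subset {H K : Type*}
    [NormedAddCommGroup H] [InnerProductSpace ℂ H] [CompleteSpace H]
    [NormedAddCommGroup K] [InnerProductSpace ℂ K] [CompleteSpace K]
    (A : H →ₗ.[ℂ] H) (B : K →ₗ.[ℂ] K)
    (hAdense : Dense (A.domain : Set H)) (hBdense : Dense (B.domain : Set K))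
    (hAclosed : A.IsClosed) (hBclosed : B.IsClosed)
    (T : H →L[ℂ] K) (Tinv : K →L[ℂ] H)
    (hleft : ∀ ξ : H, Tinv (T ξ) = ξ) (hright : ∀ η : K, T (Tinv η) = η)
    (hmap : ∀ ξ : A.domain, T (ξ : H) ∈ B.domain)
    (hint : ∀ ξ : A.domain, B ⟨T (ξ : H), hmap ξ⟩ = T (A ξ)) :
    resSet A \ pointSpectrum B ⊆ resSet B := by
  rintro l ⟨⟨R, hR1, hR2⟩, hlp⟩
  refine ⟨T.comp (R.comp Tinv), ?_, ?_⟩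
  · -- right inverse
    intro η
    obtain ⟨h1, h2⟩ := hR1 (Tinv η)
    refine ⟨hmap ⟨R (Tinv η), h1⟩, ?_⟩
    have key : B ⟨T (R (Tinv η)), hmap ⟨R (Tinv η), h1⟩⟩
        = T (A ⟨R (Tinv η), h1⟩) := hint ⟨R (Tinv η), h1⟩
    show B ⟨T (R (Tinv η)), hmap ⟨R (Tinv η), h1⟩⟩ - l • T (R (Tinv η)) = η
    rw [key, ← map_smul T l, ← map_sub, h2, hright]
  · -- left inverse, using that l is not an eigenvalue of B
    intro ξ
    set y : K := B ξ - l • (ξ : K) with hy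
    obtain ⟨h1, h2⟩ := hR1 (Tinv y)
    have hm : T (R (Tinv y)) ∈ B.domain := hmap ⟨R (Tinv y), h1⟩
    have hBS : B ⟨T (R (Tinv y)), hm⟩ - l • T (R (Tinv y)) = y := by
      have key : B ⟨T (R (Tinv y)), hm⟩ = T (A ⟨R (Tinv y), h1⟩) :=
        hint ⟨R (Tinv y), h1⟩
      rw [key, ← map_smul T l, ← map_sub, h2, hright]
    have hgoal : T (R (Tinv y)) = (ξ : K) := by
      by_contra hne
      set v : B.domain := ⟨T (R (Tinv y)), hm⟩ - ξ with hv
      have hv0 : (v : K) ≠ 0 := by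
        simpa [hv, sub_ne_zero] using hne
      have hBv : B v = l • (v : K) := by
        have h5 : B v = B ⟨T (R (Tinv y)), hm⟩ - B ξ := B.map_sub _ _
        rw [h5]
        have h3 : B ⟨T (R (Tinv y)), hm⟩ = y + l • T (R (Tinv y)) := by
          linear_combination (norm := module) hBS
        have h4 : B ξ = y + l • (ξ : K) := by
          rw [hy]; module
        rw [h3, h4]
        simp [hv, smul_sub]
      exact hlp ⟨v, hv0, hBv⟩
    show T (R (Tinv y)) = (ξ : K)
    exact hgoal
end

section
/- Let A, B be closed operators with A ⊣ B via bounded T, where T⁻¹ is everywhere defined and bounded and T(D(A)) is a core for B. Then σ_p(A) ⊆ σ_p(B) ⊆ σ(B) ⊆ σ(A). -/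
open scoped InnerProductSpace

variable {H : Type*} [NormedAddCommGroup H] [InnerProductSpace ℂ H]

theorem pointSpectrum_subset_compl_resSet (A : H →ₗ.[ℂ] H) : pointSpectrum A ⊆ (resSet A)ᶜ := by
  rintro l ⟨ξ, hξ0, hξ⟩ ⟨R, -, hR⟩
  have h := hR ξ
  rw [hξ, sub_self, map_zero] at h
  exact hξ0 h.symm

theorem LinearPMap.graph_mem_closure_of_core {R E F ι : Type*} [Ring R]
    [SeminormedAddCommGroup E] [Module R E] [SeminormedAddCommGroup F] [Module R F]
    (B : E →ₗ.[R] F) (f : ι → B.domain)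
    (hcore : ∀ (η : B.domain) (ε : ℝ), 0 < ε → ∃ i, ‖(f i : E) - η‖ < ε ∧ ‖B (f i) - B η‖ < ε)
    (η : B.domain) :
    ((η : E), B η) ∈ _root_.closure (Set.range fun i ↦ ((f i : E), B (f i))) := by
  refine Metric.mem_closure_iff.mpr fun ε hε ↦ ?_
  obtain ⟨i, hdom, hval⟩ := hcore η ε hε
  refine ⟨_, ⟨i, rfl⟩, ?_⟩
  rw [Prod.dist_eq, dist_comm, dist_eq_norm, dist_comm, dist_eq_norm]
  exact max_lt hdom hval

section Intertwining

variable {K : Type*} [NormedAddCommGroup K] [InnerProductSpace ℂ K]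
  (A : H →ₗ.[ℂ] H) (B : K →ₗ.[ℂ] K)

theorem pointSpectrum_subset_of_intertwining (T : H →ₗ[ℂ] K) (hT : Function.Injective T)
    (hmap : ∀ ξ : A.domain, T (ξ : H) ∈ B.domain)
    (hint : ∀ ξ : A.domain, B ⟨T (ξ : H), hmap ξ⟩ = T (A ξ)) :
    pointSpectrum A ⊆ pointSpectrum B := by
  rintro l ⟨ξ, hξ0, hξ⟩
  refine ⟨⟨T ξ, hmap ξ⟩, (map_ne_zero_iff T hT).mpr hξ0, ?_⟩
  change B ⟨T ξ, hmap ξ⟩ = l • T ξ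
  rw [hint, hξ, map_smul]

/-- The resolvent of `B` at `l` is `T R Tinv`, where `R` is the resolvent of `A` at `l`. -/
theorem resSet_subset_of_intertwining (T : H →L[ℂ] K) (Tinv : K →L[ℂ] H)
    (hleft : ∀ ξ : H, Tinv (T ξ) = ξ) (hright : ∀ η : K, T (Tinv η) = η)
    (hmap : ∀ ξ : A.domain, T (ξ : H) ∈ B.domain)
    (hint : ∀ ξ : A.domain, B ⟨T (ξ : H), hmap ξ⟩ = T (A ξ))
    (hcore : ∀ (η : B.domain) (ε : ℝ), 0 < ε → ∃ ξ : A.domain,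
      ‖T (ξ : H) - (η : K)‖ < ε ∧ ‖B ⟨T (ξ : H), hmap ξ⟩ - B η‖ < ε) :
    resSet A ⊆ resSet B := by
  rintro l ⟨R, hRright, hRleft⟩
  set S : K →L[ℂ] K := T ∘L R ∘L Tinv
  refine ⟨S, fun η ↦ ?_, fun η ↦ ?_⟩
  · obtain ⟨hdom, hR⟩ := hRright (Tinv η)
    refine ⟨hmap ⟨R (Tinv η), hdom⟩, ?_⟩
    change B ⟨T (R (Tinv η)), _⟩ - l • T (R (Tinv η)) = η
    rw [hint ⟨R (Tinv η), hdom⟩, ← map_smul, ← map_sub, hR, hright]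
  · -- `S (B η - l η) = η` holds on the graph of `B` restricted to `T(D(A))`, hence on its closure.
    let Z : Set (K × K) := {p | S (p.2 - l • p.1) = p.1}
    have hZ : IsClosed Z := isClosed_eq (by fun_prop) (by fun_prop)
    have hcoreZ : Set.range (fun ξ : A.domain ↦ (T ξ, B ⟨T ξ, hmap ξ⟩)) ⊆ Z := by
      rintro _ ⟨ξ, rfl⟩
      change T (R (Tinv (B ⟨T ξ, hmap ξ⟩ - l • T ξ))) = T ξ
      rw [hint, ← map_smul, ← map_sub, hleft, hRleft]
    exact closure_minimal hcoreZ hZ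
      (B.graph_mem_closure_of_core (fun ξ : A.domain ↦ ⟨T ξ, hmap ξ⟩) hcore η)

end Intertwining

theorem spectrum_chain_of_quasiSimilar_general {H K : Type*}
    [NormedAddCommGroup H] [InnerProductSpace ℂ H]
    [NormedAddCommGroup K] [InnerProductSpace ℂ K]
    (A : H →ₗ.[ℂ] H) (B : K →ₗ.[ℂ] K)
    (T : H →L[ℂ] K) (Tinv : K →L[ℂ] H)
    (hleft : ∀ ξ : H, Tinv (T ξ) = ξ) (hright : ∀ η : K, T (Tinv η) = η)
    (hmap : ∀ ξ : A.domain, T (ξ : H) ∈ B.domain)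
    (hint : ∀ ξ : A.domain, B ⟨T (ξ : H), hmap ξ⟩ = T (A ξ))
    (hcore : ∀ (η : B.domain) (ε : ℝ), 0 < ε → ∃ ξ : A.domain,
      ‖T (ξ : H) - (η : K)‖ < ε ∧ ‖B ⟨T (ξ : H), hmap ξ⟩ - B η‖ < ε) :
    pointSpectrum A ⊆ pointSpectrum B ∧
    pointSpectrum B ⊆ (resSet B)ᶜ ∧
    (resSet B)ᶜ ⊆ (resSet A)ᶜ :=
  ⟨pointSpectrum_subset_of_intertwining A B T (Function.LeftInverse.injective hleft) hmap hint,
    pointSpectrum_subset_compl_resSet B,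
    Set.compl_subset_compl.mpr
      (resSet_subset_of_intertwining A B T Tinv hleft hright hmap hint hcore)⟩

/-- If `A ⊣ B` via a bounded intertwining operator `T` with everywhere defined bounded
inverse, and `T(D(A))` is a core for `B`, then
`σ_p(A) ⊆ σ_p(B) ⊆ σ(B) ⊆ σ(A)`. -/
theorem spectrum_chain_of_quasiSimilar {H K : Type*}
    [NormedAddCommGroup H] [InnerProductSpace ℂ H] [CompleteSpace H]
    [NormedAddCommGroup K] [InnerProductSpace ℂ K] [CompleteSpace K]
    (A : H →ₗ.[ℂ] H) (B : K →ₗ.[ℂ] K)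
    (hAdense : Dense (A.domain : Set H)) (hBdense : Dense (B.domain : Set K))
    (hAclosed : A.IsClosed) (hBclosed : B.IsClosed)
    (T : H →L[ℂ] K) (Tinv : K →L[ℂ] H)
    (hleft : ∀ ξ : H, Tinv (T ξ) = ξ) (hright : ∀ η : K, T (Tinv η) = η)
    (hmap : ∀ ξ : A.domain, T (ξ : H) ∈ B.domain)
    (hint : ∀ ξ : A.domain, B ⟨T (ξ : H), hmap ξ⟩ = T (A ξ))
    (hcore : ∀ (η : B.domain) (ε : ℝ), 0 < ε → ∃ ξ : A.domain,
      ‖T (ξ : H) - (η : K)‖ < ε ∧ ‖B ⟨T (ξ : H), hmap ξ⟩ - B η‖ < ε) :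
    pointSpectrum A ⊆ pointSpectrum B ∧
    pointSpectrum B ⊆ (resSet B)ᶜ ∧
    (resSet B)ᶜ ⊆ (resSet A)ᶜ :=
  spectrum_chain_of_quasiSimilar_general A B T Tinv hleft hright hmap hint hcore
end

section
/- If A is quasi-similar to B via a closed, densely defined, injective intertwining operator T with dense range (possibly unbounded), and the resolvent set ρ(A) is nonempty, then T is necessarily bounded (everywhere defined). -/
open scoped InnerProductSpace

variable {H : Type*} [NormedAddCommGroup H] [InnerProductSpace ℂ H]

/-- If `A ⊣ B` via a closed, densely defined, injective intertwining operator `T` with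
dense range (possibly unbounded), and `ρ(A) ≠ ∅`, then `T` is everywhere defined and
bounded. -/
theorem intertwiner_bounded_of_resolvent_nonempty {H K : Type*}
    [NormedAddCommGroup H] [InnerProductSpace ℂ H] [CompleteSpace H]
    [NormedAddCommGroup K] [InnerProductSpace ℂ K] [CompleteSpace K]
    (A : H →ₗ.[ℂ] H) (B : K →ₗ.[ℂ] K)
    (hAdense : Dense (A.domain : Set H)) (hBdense : Dense (B.domain : Set K))
    (hAclosed : A.IsClosed) (hBclosed : B.IsClosed)
    (T : H →ₗ.[ℂ] K)
    (hTclosed : T.IsClosed) (hTdense : Dense (T.domain : Set H))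
    (hTinj : ∀ ξ : T.domain, T ξ = 0 → (ξ : H) = 0)
    (hTrange : Dense (Set.range fun ξ : T.domain => T ξ))
    (h0 : ∀ ξ : A.domain, (ξ : H) ∈ T.domain)
    (h0' : ∀ ξ : A.domain, A ξ ∈ T.domain)
    (h1 : ∀ ξ : A.domain, T ⟨(ξ : H), h0 ξ⟩ ∈ B.domain)
    (h2 : ∀ ξ : A.domain, B ⟨T ⟨(ξ : H), h0 ξ⟩, h1 ξ⟩ = T ⟨A ξ, h0' ξ⟩)
    (hres : ∃ l : ℂ, l ∈ resSet A) :
    T.domain = ⊤ ∧ ∃ C : ℝ, ∀ ξ : T.domain, ‖T ξ‖ ≤ C * ‖(ξ : H)‖ := by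
  obtain ⟨l, R, hR1, _⟩ := hres
  -- Every η ∈ H lies in T.domain, since η = A(Rη) - l•Rη with both terms in T.domain.
  have htop : T.domain = ⊤ := by
    rw [eq_top_iff]
    intro η _
    obtain ⟨h, heq⟩ := hR1 η
    have hmem : A ⟨R η, h⟩ - l • R η ∈ T.domain :=
      sub_mem (h0' ⟨R η, h⟩) (Submodule.smul_mem _ l (h0 ⟨R η, h⟩))
    rwa [heq] at hmem
  refine ⟨htop, ?_⟩
  -- T with full domain and closed graph is continuous by the closed graph theorem.
  let e : H →ₗ[ℂ] T.domain :=
    (LinearEquiv.ofEq ⊤ T.domain htop.symm).toLinearMap.comp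
      (Submodule.topEquiv (R := ℂ) (M := H)).symm.toLinearMap
  have he : ∀ x : H, ((e x : H)) = x := fun x => rfl
  let g : H →ₗ[ℂ] K := T.toFun.comp e
  have hgraph : (g.graph : Set (H × K)) = (T.graph : Set (H × K)) := by
    ext ⟨x, y⟩
    simp only [SetLike.mem_coe, LinearMap.mem_graph_iff, LinearPMap.mem_graph_iff]
    constructor
    · rintro rfl
      exact ⟨e x, he x, rfl⟩
    · rintro ⟨ξ, hξ, rfl⟩
      have hex : e x = ξ := Subtype.ext (by rw [he, hξ])
      show T ξ = T (e x)
      rw [hex]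
  have hcont : Continuous g := g.continuous_of_isClosed_graph (hgraph ▸ hTclosed)
  let G : H →L[ℂ] K := ⟨g, hcont⟩
  refine ⟨‖G‖, fun ξ => ?_⟩
  have hex : e (ξ : H) = ξ := Subtype.ext (he _)
  have : T ξ = G (ξ : H) := by
    show T ξ = T (e (ξ : H))
    rw [hex]
  rw [this]
  exact G.le_opNorm _
end

section
/- Let G be a bounded metric operator on H and S a closed densely defined operator in H. Define K on D(K) = G^{1/2}(D(S)) by Kξ = G^{1/2} S G^{-1/2} ξ. Then K is densely defined and its adjoint is K* = G^{-1/2} S* G^{1/2}, i.e., D(K*) = { η : G^{1/2}η ∈ D(S*), S*G^{1/2}η ∈ D(G^{-1/2}) } and K*η = G^{-1/2} S* G^{1/2} η. -/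
/-!
Since `G^{1/2}` is bounded and self-adjoint, `⟪ζ, G^{1/2} ξ⟫ = ⟪G^{1/2} ζ, ξ⟫`. Hence the relation
`⟪ζ, x⟫ = ⟪η, K x⟫` for all `x ∈ D(K) = G^{1/2} D(S)`, which characterises `K* η = ζ`, is the
relation `⟪G^{1/2} ζ, ξ⟫ = ⟪G^{1/2} η, S ξ⟫` for all `ξ ∈ D(S)`, which characterises
`S* (G^{1/2} η) = G^{1/2} ζ`. Density of `D(K)`: an injective self-adjoint operator has dense
range, so it maps the dense subspace `D(S)` onto a dense subspace.
-/

open scoped InnerProductSpace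

section

variable {𝕜 E F : Type*} [RCLike 𝕜]
  [NormedAddCommGroup E] [InnerProductSpace 𝕜 E] [NormedAddCommGroup F] [InnerProductSpace 𝕜 F]

theorem ContinuousLinearMap.injective_of_forall_re_inner_pos {A : E →L[𝕜] E}
    (hA : ∀ x : E, x ≠ 0 → 0 < RCLike.re ⟪A x, x⟫_𝕜) : Function.Injective A := by
  refine (injective_iff_map_eq_zero A).2 fun x hx => ?_
  by_contra hx0
  simpa [hx] using hA x hx0

variable [CompleteSpace E]

theorem IsSelfAdjoint.denseRange_of_injective {A : E →L[𝕜] E} (hA : IsSelfAdjoint A)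
    (hinj : Function.Injective A) : DenseRange A := by
  have hperp : (LinearMap.range (A : E →ₗ[𝕜] E))ᗮ = ⊥ := by
    rw [hA.isSymmetric.orthogonal_range]
    exact LinearMap.ker_eq_bot.2 hinj
  rwa [← Submodule.topologicalClosure_eq_top_iff,
    ← Submodule.dense_iff_topologicalClosure_eq_top] at hperp

theorem IsSelfAdjoint.dense_map_of_injective {A : E →L[𝕜] E} (hA : IsSelfAdjoint A)
    (hinj : Function.Injective A) {D : Submodule 𝕜 E} (hD : Dense (D : Set E)) :
    Dense (D.map (A : E →ₗ[𝕜] E) : Set E) := by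
  rw [Submodule.map_coe]
  exact (hA.denseRange_of_injective hinj).dense_image A.continuous hD

theorem LinearPMap.exists_adjoint_apply_eq_iff [CompleteSpace F] {T : E →ₗ.[𝕜] F}
    (hT : Dense (T.domain : Set E)) (y : F) (z : E) :
    (∃ hy : y ∈ T.adjoint.domain, T.adjoint ⟨y, hy⟩ = z) ↔
      ∀ x : T.domain, ⟪z, x⟫_𝕜 = ⟪y, T x⟫_𝕜 := by
  constructor
  · rintro ⟨hy, rfl⟩ x
    exact T.adjoint_isFormalAdjoint hT ⟨y, hy⟩ x
  · intro h
    have hy := T.mem_adjoint_domain_of_exists y ⟨z, h⟩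
    exact ⟨hy, T.adjoint_apply_eq hT ⟨y, hy⟩ h⟩

variable {A : E →L[𝕜] E} {S K : E →ₗ.[𝕜] E}

theorem forall_inner_conj_iff (hA : IsSelfAdjoint A)
    (hKdom : K.domain = S.domain.map (A : E →ₗ[𝕜] E))
    (hKval : ∀ (ξ : S.domain) (h : A ξ ∈ K.domain), K ⟨A ξ, h⟩ = A (S ξ)) (η ζ : E) :
    (∀ x : K.domain, ⟪ζ, x⟫_𝕜 = ⟪η, K x⟫_𝕜) ↔ ∀ ξ : S.domain, ⟪A ζ, ξ⟫_𝕜 = ⟪A η, S ξ⟫_𝕜 := by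
  have hmem (ξ : S.domain) : A ξ ∈ K.domain := hKdom ▸ Submodule.mem_map_of_mem ξ.2
  have hconj (ξ : S.domain) :
      ⟪ζ, A ξ⟫_𝕜 = ⟪η, K ⟨A ξ, hmem ξ⟩⟫_𝕜 ↔ ⟪A ζ, ξ⟫_𝕜 = ⟪A η, S ξ⟫_𝕜 := by
    have hsym : ∀ x y : E, ⟪A x, y⟫_𝕜 = ⟪x, A y⟫_𝕜 := hA.isSymmetric
    rw [hKval, hsym, hsym]
  constructor
  · exact fun h ξ => (hconj ξ).1 (h ⟨A ξ, hmem ξ⟩)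
  · rintro h ⟨x, hx⟩
    obtain ⟨ξ, hξ, rfl⟩ := Submodule.mem_map.1 (hKdom ▸ hx)
    exact (hconj ⟨ξ, hξ⟩).2 (h _)

theorem exists_adjoint_apply_eq_iff_of_conj (hA : IsSelfAdjoint A)
    (hKdom : K.domain = S.domain.map (A : E →ₗ[𝕜] E))
    (hKval : ∀ (ξ : S.domain) (h : A ξ ∈ K.domain), K ⟨A ξ, h⟩ = A (S ξ))
    (hKdense : Dense (K.domain : Set E)) (hSdense : Dense (S.domain : Set E)) (η ζ : E) :
    (∃ hη : η ∈ K.adjoint.domain, K.adjoint ⟨η, hη⟩ = ζ) ↔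
      ∃ h : A η ∈ S.adjoint.domain, S.adjoint ⟨A η, h⟩ = A ζ := by
  rw [K.exists_adjoint_apply_eq_iff hKdense, S.exists_adjoint_apply_eq_iff hSdense,
    forall_inner_conj_iff hA hKdom hKval]

end

theorem adjoint_of_halfConjugated_general {H : Type*}
    [NormedAddCommGroup H] [InnerProductSpace ℂ H] [CompleteSpace H]
    (Ghalf : H →L[ℂ] H)
    (hGh : IsSelfAdjoint Ghalf)
    (hGhpos : ∀ ξ : H, ξ ≠ 0 → 0 < (⟪Ghalf ξ, ξ⟫_ℂ).re)
    (S : H →ₗ.[ℂ] H)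
    (hSdense : Dense (S.domain : Set H))
    (Kop : H →ₗ.[ℂ] H)
    (hKdom : Kop.domain = S.domain.map (Ghalf : H →ₗ[ℂ] H))
    (hKval : ∀ (ξ : S.domain) (h : Ghalf (ξ : H) ∈ Kop.domain),
      Kop ⟨Ghalf (ξ : H), h⟩ = Ghalf (S ξ)) :
    Dense (Kop.domain : Set H) ∧
    (∀ η : H, η ∈ Kop.adjoint.domain ↔
      ∃ h : Ghalf η ∈ S.adjoint.domain,
        S.adjoint ⟨Ghalf η, h⟩ ∈ Set.range Ghalf) ∧
    (∀ (η : Kop.adjoint.domain) (h : Ghalf (η : H) ∈ S.adjoint.domain),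
      Ghalf (Kop.adjoint η) = S.adjoint ⟨Ghalf (η : H), h⟩) := by
  have hinj := ContinuousLinearMap.injective_of_forall_re_inner_pos (A := Ghalf) hGhpos
  have hKdense : Dense (Kop.domain : Set H) := hKdom ▸ hGh.dense_map_of_injective hinj hSdense
  have hconj := exists_adjoint_apply_eq_iff_of_conj hGh hKdom hKval hKdense hSdense
  refine ⟨hKdense, fun η => ⟨fun hη => ?_, ?_⟩, fun η _ => ?_⟩
  · obtain ⟨h, hval⟩ := (hconj η _).1 ⟨hη, rfl⟩
    exact ⟨h, _, hval.symm⟩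
  · rintro ⟨h, ζ, hζ⟩
    exact ((hconj η ζ).2 ⟨h, hζ.symm⟩).1
  · exact ((hconj η (Kop.adjoint η)).1 ⟨η.2, rfl⟩).2.symm

/-- Let `G` be a bounded metric operator on `H` with positive square root `Ghalf`
(`G⁻¹` possibly unbounded), and `S` a closed densely defined operator. Let
`K = G^{1/2} S G^{-1/2}` on `D(K) = G^{1/2}(D(S))`, i.e. `K (Ghalf ξ) = Ghalf (S ξ)`
for `ξ ∈ D(S)`. Then `K` is densely defined and `K* = G^{-1/2} S* G^{1/2}`, i.e.
`D(K*) = { η : Ghalf η ∈ D(S*), S* Ghalf η ∈ D(G^{-1/2}) = range Ghalf }` and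
`Ghalf (K* η) = S* (Ghalf η)`. -/
theorem adjoint_of_halfConjugated {H : Type*}
    [NormedAddCommGroup H] [InnerProductSpace ℂ H] [CompleteSpace H]
    (G Ghalf : H →L[ℂ] H)
    (hG : IsSelfAdjoint G)
    (hGpos : ∀ ξ : H, ξ ≠ 0 → 0 < (⟪G ξ, ξ⟫_ℂ).re)
    (hGh : IsSelfAdjoint Ghalf)
    (hGhpos : ∀ ξ : H, ξ ≠ 0 → 0 < (⟪Ghalf ξ, ξ⟫_ℂ).re)
    (hsq : Ghalf.comp Ghalf = G)
    (S : H →ₗ.[ℂ] H)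
    (hSdense : Dense (S.domain : Set H)) (hSclosed : S.IsClosed)
    (Kop : H →ₗ.[ℂ] H)
    (hKdom : Kop.domain = S.domain.map (Ghalf : H →ₗ[ℂ] H))
    (hKval : ∀ (ξ : S.domain) (h : Ghalf (ξ : H) ∈ Kop.domain),
      Kop ⟨Ghalf (ξ : H), h⟩ = Ghalf (S ξ)) :
    Dense (Kop.domain : Set H) ∧
    (∀ η : H, η ∈ Kop.adjoint.domain ↔
      ∃ h : Ghalf η ∈ S.adjoint.domain,
        S.adjoint ⟨Ghalf η, h⟩ ∈ Set.range Ghalf) ∧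
    (∀ (η : Kop.adjoint.domain) (h : Ghalf (η : H) ∈ S.adjoint.domain),
      Ghalf (Kop.adjoint η) = S.adjoint ⟨Ghalf (η : H), h⟩) :=
  adjoint_of_halfConjugated_general Ghalf hGh hGhpos S hSdense Kop hKdom hKval
end

section
/- Let A be a closed densely defined operator and G a bounded metric operator with bounded inverse. If GA = A*G (with equal domains), then K := G^{1/2} A G^{-1/2} is self-adjoint; conversely, if G^{1/2} A G^{-1/2} is self-adjoint, then GA = A*G and GA is self-adjoint. -/
open scoped InnerProductSpace

variable {H : Type*} [NormedAddCommGroup H] [InnerProductSpace ℂ H]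

/-- The partially defined operator `G ∘ A` with domain `D(A)`, for a bounded `G`. -/
def compCLM (G : H →L[ℂ] H) (A : H →ₗ.[ℂ] H) : H →ₗ.[ℂ] H :=
  ⟨A.domain, (G : H →ₗ[ℂ] H).comp A.toFun⟩

/-- Helper: if `⟪z, x⟫ = ⟪y, T x⟫` for all `x` in the (dense) domain of `T`, then `y` is in
the domain of the adjoint and the adjoint sends `y` to `z`. -/
lemma adjoint_mem_and_eq {E : Type*} [NormedAddCommGroup E] [InnerProductSpace ℂ E]
    [CompleteSpace E] {T : E →ₗ.[ℂ] E} (hT : Dense (T.domain : Set E)) {y z : E}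
    (h : ∀ x : T.domain, ⟪z, (x : E)⟫_ℂ = ⟪y, T x⟫_ℂ) :
    ∃ hy : y ∈ T.adjoint.domain, T.adjoint ⟨y, hy⟩ = z := by
  have hy : y ∈ T.adjoint.domain := LinearPMap.mem_adjoint_domain_of_exists y ⟨z, h⟩
  exact ⟨hy, LinearPMap.adjoint_apply_eq hT ⟨y, hy⟩ h⟩

/-- Let `A` be closed and densely defined and `G` a bounded metric operator with bounded
inverse, with positive square root `Ghalf` (and its bounded inverse `Ghalfinv`), and let
`K := G^{1/2} A G^{-1/2}` with domain `G^{1/2}(D(A))`. If `GA = A*G` (with equal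
domains, i.e. `G(D(A)) = D(A*)` and `A*Gξ = GAξ` on `D(A)`), then `K` is self-adjoint;
conversely, if `K` is self-adjoint then `GA = A*G` and `GA` is self-adjoint. -/
theorem quasiselfadjoint_iff_halfConjugate_selfAdjoint {H : Type*}
    [NormedAddCommGroup H] [InnerProductSpace ℂ H] [CompleteSpace H]
    (G Ginv Ghalf Ghalfinv : H →L[ℂ] H)
    (hG : IsSelfAdjoint G)
    (hGpos : ∀ ξ : H, ξ ≠ 0 → 0 < (⟪G ξ, ξ⟫_ℂ).re)
    (hGinv : G.comp Ginv = ContinuousLinearMap.id ℂ H)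
    (hGinv' : Ginv.comp G = ContinuousLinearMap.id ℂ H)
    (hGh : IsSelfAdjoint Ghalf)
    (hGhpos : ∀ ξ : H, ξ ≠ 0 → 0 < (⟪Ghalf ξ, ξ⟫_ℂ).re)
    (hsq : Ghalf.comp Ghalf = G)
    (hGhinv : Ghalf.comp Ghalfinv = ContinuousLinearMap.id ℂ H)
    (hGhinv' : Ghalfinv.comp Ghalf = ContinuousLinearMap.id ℂ H)
    (A : H →ₗ.[ℂ] H)
    (hAdense : Dense (A.domain : Set H)) (hAclosed : A.IsClosed)
    (Kop : H →ₗ.[ℂ] H)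
    (hKdom : Kop.domain = A.domain.map (Ghalf : H →ₗ[ℂ] H))
    (hKval : ∀ (ξ : A.domain) (h : Ghalf (ξ : H) ∈ Kop.domain),
      Kop ⟨Ghalf (ξ : H), h⟩ = Ghalf (A ξ)) :
    ((A.adjoint.domain = A.domain.map (G : H →ₗ[ℂ] H) ∧
        ∀ (ξ : A.domain) (h : G (ξ : H) ∈ A.adjoint.domain),
          A.adjoint ⟨G (ξ : H), h⟩ = G (A ξ)) →
      Kop.adjoint = Kop) ∧
    (Kop.adjoint = Kop →
      (A.adjoint.domain = A.domain.map (G : H →ₗ[ℂ] H) ∧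
        (∀ (ξ : A.domain) (h : G (ξ : H) ∈ A.adjoint.domain),
          A.adjoint ⟨G (ξ : H), h⟩ = G (A ξ)) ∧
        (compCLM G A).adjoint = compCLM G A)) := by
  -- basic consequences
  have hGhapp : ∀ x, Ghalf (Ghalf x) = G x := fun x => by
    have := congrFun (congrArg DFunLike.coe hsq) x; simpa using this
  have hGhinvapp : ∀ x, Ghalfinv (Ghalf x) = x := fun x => by
    have := congrFun (congrArg DFunLike.coe hGhinv') x; simpa using this
  have hGhinvapp' : ∀ x, Ghalf (Ghalfinv x) = x := fun x => by
    have := congrFun (congrArg DFunLike.coe hGhinv) x; simpa using this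
  have hGinvapp : ∀ x, Ginv (G x) = x := fun x => by
    have := congrFun (congrArg DFunLike.coe hGinv') x; simpa using this
  have hGhinj : Function.Injective Ghalf := fun x y h => by
    have := congrArg Ghalfinv h; rwa [hGhinvapp, hGhinvapp] at this
  have hGinj : Function.Injective G := fun x y h => by
    have := congrArg Ginv h; rwa [hGinvapp, hGinvapp] at this
  have hGhsym : ∀ x y : H, ⟪Ghalf x, y⟫_ℂ = ⟪x, Ghalf y⟫_ℂ := fun x y => hGh.isSymmetric x y
  have hGsym : ∀ x y : H, ⟪G x, y⟫_ℂ = ⟪x, G y⟫_ℂ := fun x y => hG.isSymmetric x y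
  have hGhinvsym : ∀ x y : H, ⟪Ghalfinv x, y⟫_ℂ = ⟪x, Ghalfinv y⟫_ℂ := fun x y => by
    conv_lhs => rw [← hGhinvapp' y]
    rw [← hGhsym, hGhinvapp']
  have hGGh : ∀ x y : H, ⟪Ghalf x, Ghalf y⟫_ℂ = ⟪G x, y⟫_ℂ := fun x y => by
    rw [hGhsym, hGhapp, ← hGsym]
  -- density of the domain of K
  have hKdense : Dense (Kop.domain : Set H) := by
    rw [hKdom]
    have hsurj : Function.Surjective Ghalf := fun y => ⟨Ghalfinv y, hGhinvapp' y⟩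
    have : (A.domain.map (Ghalf : H →ₗ[ℂ] H) : Set H) = Ghalf '' (A.domain : Set H) := rfl
    rw [this]
    exact hsurj.denseRange.dense_image Ghalf.continuous hAdense
  -- K domain membership and representation
  have hKmem : ∀ ξ : A.domain, Ghalf (ξ : H) ∈ Kop.domain := fun ξ => by
    rw [hKdom]; exact Submodule.mem_map_of_mem ξ.2
  have hKrep : ∀ x : Kop.domain, ∃ ξ : A.domain, Ghalf (ξ : H) = (x : H) := fun x => by
    have hx : (x : H) ∈ A.domain.map (Ghalf : H →ₗ[ℂ] H) := by rw [← hKdom]; exact x.2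
    obtain ⟨v, hv, hfv⟩ := Submodule.mem_map.mp hx
    exact ⟨⟨v, hv⟩, hfv⟩
  have hKapp : ∀ (x : Kop.domain) (ξ : A.domain), Ghalf (ξ : H) = (x : H) →
      Kop x = Ghalf (A ξ) := fun x ξ hξ => by
    have h1 : Ghalf (ξ : H) ∈ Kop.domain := by rw [hξ]; exact x.2
    rw [← hKval ξ h1]; exact congrArg Kop (Subtype.ext hξ.symm)
  -- the formal adjoint property of A's adjoint
  have hfaA : A.adjoint.IsFormalAdjoint A := LinearPMap.adjoint_isFormalAdjoint hAdense
  constructor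
  · -- quasi-selfadjointness implies K selfadjoint
    rintro ⟨hdom, hval⟩
    have hAGmem : ∀ ξ : A.domain, G (ξ : H) ∈ A.adjoint.domain := fun ξ => by
      rw [hdom]; exact Submodule.mem_map_of_mem ξ.2
    have hKsymm : Kop.IsFormalAdjoint Kop := by
      intro x y
      obtain ⟨ξ, hξ⟩ := hKrep x
      obtain ⟨η, hη⟩ := hKrep y
      rw [hKapp x ξ hξ, hKapp y η hη, ← hξ, ← hη]
      calc ⟪Ghalf (A ξ), Ghalf (η : H)⟫_ℂ = ⟪G (A ξ), (η : H)⟫_ℂ := hGGh _ _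
        _ = ⟪A.adjoint ⟨G (ξ : H), hAGmem ξ⟩, (η : H)⟫_ℂ := by rw [hval ξ (hAGmem ξ)]
        _ = ⟪G (ξ : H), A η⟫_ℂ := hfaA ⟨G (ξ : H), hAGmem ξ⟩ η
        _ = ⟪Ghalf (ξ : H), Ghalf (A η)⟫_ℂ := (hGGh _ _).symm
    have hle1 : Kop ≤ Kop.adjoint := hKsymm.le_adjoint hKdense
    have key : ∀ (y : H) (hy : y ∈ Kop.adjoint.domain), ∃ ζ : A.domain,
        Ghalf (ζ : H) = y ∧ Kop.adjoint ⟨y, hy⟩ = Ghalf (A ζ) := by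
      intro y hy
      have hfaK : Kop.adjoint.IsFormalAdjoint Kop := LinearPMap.adjoint_isFormalAdjoint hKdense
      have h1 : ∀ ξ : A.domain, ⟪Ghalf (Kop.adjoint ⟨y, hy⟩), (ξ : H)⟫_ℂ
          = ⟪Ghalf y, A ξ⟫_ℂ := by
        intro ξ
        calc ⟪Ghalf (Kop.adjoint ⟨y, hy⟩), (ξ : H)⟫_ℂ
            = ⟪Kop.adjoint ⟨y, hy⟩, Ghalf (ξ : H)⟫_ℂ := hGhsym _ _
          _ = ⟪y, Kop ⟨Ghalf (ξ : H), hKmem ξ⟩⟫_ℂ := hfaK ⟨y, hy⟩ ⟨Ghalf (ξ : H), hKmem ξ⟩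
          _ = ⟪y, Ghalf (A ξ)⟫_ℂ := by rw [hKapp ⟨Ghalf (ξ : H), hKmem ξ⟩ ξ rfl]
          _ = ⟪Ghalf y, A ξ⟫_ℂ := (hGhsym _ _).symm
      obtain ⟨hmem, heq⟩ := adjoint_mem_and_eq hAdense h1
      have hm2 : Ghalf y ∈ A.domain.map (G : H →ₗ[ℂ] H) := by rw [← hdom]; exact hmem
      obtain ⟨w, hw, hfw⟩ := Submodule.mem_map.mp hm2
      have hGw : G w = Ghalf y := hfw
      have hy1 : Ghalf w = y := hGhinj (by rw [hGhapp, hGw])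
      refine ⟨⟨w, hw⟩, hy1, ?_⟩
      apply hGhinj
      have h3 : G (w : H) ∈ A.adjoint.domain := by
        rw [hdom]; exact Submodule.mem_map_of_mem hw
      have h4 := hval ⟨w, hw⟩ h3
      have h5 : A.adjoint ⟨G w, h3⟩ = A.adjoint ⟨Ghalf y, hmem⟩ :=
        congrArg A.adjoint (Subtype.ext hGw)
      rw [← heq, ← h5, h4, hGhapp]
    have hle2 : Kop.adjoint ≤ Kop := by
      constructor
      · intro y hy
        obtain ⟨ζ, hζ, -⟩ := key y hy
        rw [← hζ]; exact hKmem ζ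
      · rintro ⟨y, hy⟩ x hxy
        obtain ⟨ζ, hζ, hv⟩ := key y hy
        rw [hv, hKapp x ζ (by rw [hζ]; exact hxy)]
    exact le_antisymm hle2 hle1
  · -- K selfadjoint implies quasi-selfadjointness and GA selfadjoint
    intro hK
    have hKsymm2 : ∀ x y : Kop.domain, ⟪Kop x, (y : H)⟫_ℂ = ⟪(x : H), Kop y⟫_ℂ := by
      have h := LinearPMap.adjoint_isFormalAdjoint hKdense (T := Kop)
      rw [hK] at h
      exact fun x y => h x y
    have c1 : ∀ ξ : A.domain, ∃ h : G (ξ : H) ∈ A.adjoint.domain,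
        A.adjoint ⟨G (ξ : H), h⟩ = G (A ξ) := by
      intro ξ
      apply adjoint_mem_and_eq hAdense
      intro ζ
      calc ⟪G (A ξ), (ζ : H)⟫_ℂ = ⟪Ghalf (A ξ), Ghalf (ζ : H)⟫_ℂ := (hGGh _ _).symm
        _ = ⟪Kop ⟨Ghalf (ξ : H), hKmem ξ⟩, Ghalf (ζ : H)⟫_ℂ := by
            rw [hKapp ⟨Ghalf (ξ : H), hKmem ξ⟩ ξ rfl]
        _ = ⟪Kop ⟨Ghalf (ξ : H), hKmem ξ⟩, ((⟨Ghalf (ζ : H), hKmem ζ⟩ : Kop.domain) : H)⟫_ℂ := rfl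
        _ = ⟪Ghalf (ξ : H), Kop ⟨Ghalf (ζ : H), hKmem ζ⟩⟫_ℂ := hKsymm2 _ _
        _ = ⟪Ghalf (ξ : H), Ghalf (A ζ)⟫_ℂ := by rw [hKapp ⟨Ghalf (ζ : H), hKmem ζ⟩ ζ rfl]
        _ = ⟪G (ξ : H), A ζ⟫_ℂ := hGGh _ _
    have hdomeq : A.adjoint.domain = A.domain.map (G : H →ₗ[ℂ] H) := by
      apply le_antisymm
      · intro u hu
        have h1 : ∀ x : Kop.domain, ⟪Ghalfinv (A.adjoint ⟨u, hu⟩), (x : H)⟫_ℂ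
            = ⟪Ghalfinv u, Kop x⟫_ℂ := by
          intro x
          obtain ⟨ζ, hζ⟩ := hKrep x
          rw [hKapp x ζ hζ, ← hζ]
          calc ⟪Ghalfinv (A.adjoint ⟨u, hu⟩), Ghalf (ζ : H)⟫_ℂ
              = ⟪A.adjoint ⟨u, hu⟩, Ghalfinv (Ghalf (ζ : H))⟫_ℂ := hGhinvsym _ _
            _ = ⟪A.adjoint ⟨u, hu⟩, (ζ : H)⟫_ℂ := by rw [hGhinvapp]
            _ = ⟪u, A ζ⟫_ℂ := hfaA ⟨u, hu⟩ ζ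
            _ = ⟪Ghalf (Ghalfinv u), A ζ⟫_ℂ := by rw [hGhinvapp']
            _ = ⟪Ghalfinv u, Ghalf (A ζ)⟫_ℂ := hGhsym _ _
        obtain ⟨hmem, -⟩ := adjoint_mem_and_eq hKdense h1
        rw [hK] at hmem
        obtain ⟨ζ, hζ⟩ := hKrep ⟨Ghalfinv u, hmem⟩
        have : G (ζ : H) = u := by
          rw [← hGhapp]
          show Ghalf (Ghalf (ζ : H)) = u
          rw [show Ghalf (ζ : H) = Ghalfinv u from hζ, hGhinvapp']
        exact Submodule.mem_map.mpr ⟨(ζ : H), ζ.2, this⟩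
      · intro u hu
        obtain ⟨v, hv, hfv⟩ := Submodule.mem_map.mp hu
        obtain ⟨h0, -⟩ := c1 ⟨v, hv⟩
        exact hfv ▸ h0
    have hvals : ∀ (ξ : A.domain) (h : G (ξ : H) ∈ A.adjoint.domain),
        A.adjoint ⟨G (ξ : H), h⟩ = G (A ξ) := by
      intro ξ h
      obtain ⟨h0, e⟩ := c1 ξ
      exact e
    refine ⟨hdomeq, hvals, ?_⟩
    -- now the selfadjointness of G ∘ A
    have hBdense : Dense (((compCLM G A).domain : Set H)) := hAdense
    have hBapp : ∀ x : (compCLM G A).domain, (compCLM G A) x = G (A x) := fun _ => rfl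
    have hfaB : (compCLM G A).adjoint.IsFormalAdjoint (compCLM G A) :=
      LinearPMap.adjoint_isFormalAdjoint hBdense
    have hBsymm : (compCLM G A).IsFormalAdjoint (compCLM G A) := by
      intro x y
      obtain ⟨hx0, ex⟩ := c1 x
      calc ⟪(compCLM G A) x, (y : H)⟫_ℂ = ⟪G (A x), (y : H)⟫_ℂ := rfl
        _ = ⟪A.adjoint ⟨G (x : H), hx0⟩, (y : H)⟫_ℂ := by rw [ex]
        _ = ⟪G (x : H), A y⟫_ℂ := hfaA ⟨G (x : H), hx0⟩ y
        _ = ⟪(x : H), G (A y)⟫_ℂ := hGsym _ _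
        _ = ⟪(x : H), (compCLM G A) y⟫_ℂ := rfl
    have hle1 : compCLM G A ≤ (compCLM G A).adjoint := hBsymm.le_adjoint hBdense
    have key2 : ∀ (y : H) (hy : y ∈ (compCLM G A).adjoint.domain), ∃ hmem : y ∈ A.domain,
        (compCLM G A).adjoint ⟨y, hy⟩ = G (A ⟨y, hmem⟩) := by
      intro y hy
      have h1 : ∀ ξ : A.domain, ⟪(compCLM G A).adjoint ⟨y, hy⟩, (ξ : H)⟫_ℂ
          = ⟪G y, A ξ⟫_ℂ := by
        intro ξ
        calc ⟪(compCLM G A).adjoint ⟨y, hy⟩, (ξ : H)⟫_ℂ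
            = ⟪y, (compCLM G A) ξ⟫_ℂ := hfaB ⟨y, hy⟩ ξ
          _ = ⟪y, G (A ξ)⟫_ℂ := rfl
          _ = ⟪G y, A ξ⟫_ℂ := (hGsym _ _).symm
      obtain ⟨hmem, heq⟩ := adjoint_mem_and_eq hAdense h1
      have hm2 : G y ∈ A.domain.map (G : H →ₗ[ℂ] H) := by rw [← hdomeq]; exact hmem
      obtain ⟨w, hw, hfw⟩ := Submodule.mem_map.mp hm2
      have hyw : y ∈ A.domain := hGinj hfw ▸ hw
      obtain ⟨h0, e0⟩ := c1 ⟨y, hyw⟩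
      exact ⟨hyw, heq.symm.trans e0⟩
    have hle2 : (compCLM G A).adjoint ≤ compCLM G A := by
      constructor
      · intro y hy
        obtain ⟨hmem, -⟩ := key2 y hy
        exact hmem
      · rintro ⟨y, hy⟩ x hxy
        obtain ⟨hmem, hv⟩ := key2 y hy
        rw [hv]
        have : x = ⟨y, hmem⟩ := Subtype.ext hxy.symm
        rw [this]
        exact (hBapp ⟨y, hmem⟩).symm
    exact le_antisymm hle2 hle1
end

section
/- Let A be closed and densely defined and G a bounded metric operator (G⁻¹ possibly unbounded). If G(D(A)) = D(A*) and A*Gξ = GAξ for every ξ ∈ D(A), then the operator K := G^{1/2} A G^{-1/2}, with domain G^{1/2}(D(A)), is self-adjoint in H. -/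
open scoped InnerProductSpace

/-- Let `A` be closed and densely defined and `G` a bounded metric operator with
positive square root `Ghalf` (the inverse `G⁻¹` is possibly unbounded). If
`G(D(A)) = D(A*)` and `A* G ξ = G A ξ` for every `ξ ∈ D(A)`, then the operator
`K := G^{1/2} A G^{-1/2}` with domain `G^{1/2}(D(A))` (i.e. `K (Ghalf ξ) = Ghalf (A ξ)`
for `ξ ∈ D(A)`) is self-adjoint in `H`. -/
theorem halfConjugate_selfAdjoint {H : Type*}
    [NormedAddCommGroup H] [InnerProductSpace ℂ H] [CompleteSpace H]
    (G Ghalf : H →L[ℂ] H)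
    (hG : IsSelfAdjoint G)
    (hGpos : ∀ ξ : H, ξ ≠ 0 → 0 < (⟪G ξ, ξ⟫_ℂ).re)
    (hGh : IsSelfAdjoint Ghalf)
    (hGhpos : ∀ ξ : H, ξ ≠ 0 → 0 < (⟪Ghalf ξ, ξ⟫_ℂ).re)
    (hsq : Ghalf.comp Ghalf = G)
    (A : H →ₗ.[ℂ] H)
    (hAdense : Dense (A.domain : Set H)) (hAclosed : A.IsClosed)
    (hdom : A.adjoint.domain = A.domain.map (G : H →ₗ[ℂ] H))
    (hint : ∀ (ξ : A.domain) (h : G (ξ : H) ∈ A.adjoint.domain),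
      A.adjoint ⟨G (ξ : H), h⟩ = G (A ξ))
    (Kop : H →ₗ.[ℂ] H)
    (hKdom : Kop.domain = A.domain.map (Ghalf : H →ₗ[ℂ] H))
    (hKval : ∀ (ξ : A.domain) (h : Ghalf (ξ : H) ∈ Kop.domain),
      Kop ⟨Ghalf (ξ : H), h⟩ = Ghalf (A ξ)) :
    Kop.adjoint = Kop := by
  -- `Ghalf` is injective
  have hGhinj : ∀ x : H, Ghalf x = 0 → x = 0 := by
    intro x hx
    by_contra hne
    have := hGhpos x hne
    rw [hx, inner_zero_left] at this
    simp at this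
  -- `Ghalf ∘ Ghalf = G` pointwise
  have hsq' : ∀ x : H, Ghalf (Ghalf x) = G x := by
    intro x
    have := congrArg (fun T : H →L[ℂ] H => T x) hsq
    simpa using this
  -- `Ghalf` has dense range
  have hGhrange : DenseRange Ghalf := by
    have htop : (LinearMap.range (Ghalf : H →ₗ[ℂ] H)).topologicalClosure = ⊤ := by
      rw [Submodule.topologicalClosure_eq_top_iff, Submodule.eq_bot_iff]
      intro x hx
      have h0 : ⟪Ghalf x, x⟫_ℂ = 0 :=
        hx (Ghalf x) (LinearMap.mem_range.mpr ⟨x, rfl⟩)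
      by_contra hne
      have := hGhpos x hne
      rw [h0] at this
      simp at this
    have hdense : Dense ((LinearMap.range (Ghalf : H →ₗ[ℂ] H)) : Set H) :=
      Submodule.dense_iff_topologicalClosure_eq_top.mpr htop
    simpa [DenseRange, LinearMap.coe_range] using hdense
  -- the domain of `Kop` is dense
  have hKdense : Dense (Kop.domain : Set H) := by
    rw [hKdom]
    have himg : ((A.domain.map (Ghalf : H →ₗ[ℂ] H)) : Set H)
        = Ghalf '' (A.domain : Set H) := by
      ext x
      simp [Submodule.mem_map]
    rw [himg]
    exact hGhrange.dense_image Ghalf.continuous hAdense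
  -- membership helpers
  have hmemK : ∀ ξ : A.domain, Ghalf (ξ : H) ∈ Kop.domain := by
    intro ξ
    rw [hKdom]
    exact Submodule.mem_map.mpr ⟨(ξ : H), ξ.2, rfl⟩
  have hmemA : ∀ ξ : A.domain, G (ξ : H) ∈ A.adjoint.domain := by
    intro ξ
    rw [hdom]
    exact Submodule.mem_map.mpr ⟨(ξ : H), ξ.2, rfl⟩
  have hAform := LinearPMap.adjoint_isFormalAdjoint hAdense
  -- `Kop` is symmetric
  have hsym : Kop.IsFormalAdjoint Kop := by
    rintro ⟨x, hx⟩ ⟨y, hy⟩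
    rw [hKdom] at hx hy
    obtain ⟨ξ, hξ, hξx⟩ := Submodule.mem_map.mp hx
    obtain ⟨η, hη, hηy⟩ := Submodule.mem_map.mp hy
    subst hξx; subst hηy
    set ξ' : A.domain := ⟨ξ, hξ⟩ with hξ'def
    set η' : A.domain := ⟨η, hη⟩ with hη'def
    have hx' : Ghalf (ξ' : H) ∈ Kop.domain := hmemK ξ'
    have hy' : Ghalf (η' : H) ∈ Kop.domain := hmemK η'
    show ⟪Kop ⟨Ghalf ξ, hx'⟩, Ghalf η⟫_ℂ = ⟪Ghalf ξ, Kop ⟨Ghalf η, hy'⟩⟫_ℂ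
    rw [hKval ξ' hx', hKval η' hy']
    calc ⟪Ghalf (A ξ'), Ghalf η⟫_ℂ
        = ⟪A ξ', Ghalf (Ghalf η)⟫_ℂ := hGh.isSymmetric (A ξ') (Ghalf η)
      _ = ⟪A ξ', G η⟫_ℂ := by rw [hsq' η]
      _ = (starRingEnd ℂ) ⟪G η, A ξ'⟫_ℂ := (inner_conj_symm _ _).symm
      _ = (starRingEnd ℂ) ⟪G (A η'), ξ⟫_ℂ := by
            rw [← hint η' (hmemA η'), hAform ⟨G η, hmemA η'⟩ ξ']
      _ = ⟪ξ, G (A η')⟫_ℂ := inner_conj_symm _ _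
      _ = ⟪G ξ, A η'⟫_ℂ := (hG.isSymmetric ξ (A η')).symm
      _ = ⟪Ghalf (Ghalf ξ), A η'⟫_ℂ := by rw [hsq' ξ]
      _ = ⟪Ghalf ξ, Ghalf (A η')⟫_ℂ := hGh.isSymmetric (Ghalf ξ) (A η')
  have hle : Kop ≤ Kop.adjoint := hsym.le_adjoint hKdense
  -- the domain of the adjoint is contained in the domain of `Kop`
  have hdomle : Kop.adjoint.domain ≤ Kop.domain := by
    intro u hu
    set uu : Kop.adjoint.domain := ⟨u, hu⟩ with huu
    have hKform := LinearPMap.adjoint_isFormalAdjoint hKdense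
    have hmem : Ghalf u ∈ A.adjoint.domain := by
      apply LinearPMap.mem_adjoint_domain_of_exists
      refine ⟨Ghalf (Kop.adjoint uu), ?_⟩
      intro x
      calc ⟪Ghalf (Kop.adjoint uu), (x : H)⟫_ℂ
          = ⟪Kop.adjoint uu, Ghalf (x : H)⟫_ℂ := hGh.isSymmetric _ _
        _ = ⟪u, Kop ⟨Ghalf (x : H), hmemK x⟩⟫_ℂ := hKform uu ⟨Ghalf (x : H), hmemK x⟩
        _ = ⟪u, Ghalf (A x)⟫_ℂ := by rw [hKval x (hmemK x)]
        _ = ⟪Ghalf u, A x⟫_ℂ := (hGh.isSymmetric u (A x)).symm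
    rw [hdom] at hmem
    obtain ⟨ξ₀, hξ₀, hGξ₀⟩ := Submodule.mem_map.mp hmem
    have h' : G ξ₀ = Ghalf u := hGξ₀
    have h0 : Ghalf (u - Ghalf ξ₀) = 0 := by
      rw [map_sub, hsq' ξ₀, h', sub_self]
    have hu' : u = Ghalf ξ₀ := by
      have := hGhinj _ h0
      rwa [sub_eq_zero] at this
    rw [hKdom]
    exact Submodule.mem_map.mpr ⟨ξ₀, hξ₀, hu'.symm⟩
  exact (LinearPMap.eq_of_le_of_domain_eq hle (le_antisymm hle.1 hdomle)).symm
end
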